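/- In the root system of type $D_\ell$ ($\ell \ge 4$) with simple roots $\alpha_1,\ldots,\alpha_\ell$ in the standard labeling, let $\Theta = \Sigma\setminus\{\alpha_{\ell-1},\alpha_\ell\}$ and $\delta_P = \sum_{\gamma\in\Pi^+\setminus\langle\Theta\rangle^+}\gamma$. Then $\langle\delta_P, h_{\alpha_{\ell-1}}^\vee\rangle = \ell$ and $\langle\delta_P, h_{\alpha_\ell}^\vee\rangle = \ell$. -/

import Mathlib

open Finset
open scoped Classical

noncomputable section

/-- `i`-th standard basis vector of `ℚ^k`. -/
def E (k : ℕ) (i : Fin k) : Fin k → ℚ := fun j => if j = i then 1 else 0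

/-- The Euclidean inner product on `ℚ^k`. -/
def dot {k : ℕ} (v w : Fin k → ℚ) : ℚ := ∑ i, v i * w i

/-- The pairing `⟨β, h_γ^∨⟩ = 2(β,γ)/(γ,γ)` of `β` with the coroot of `γ`. -/
def pairing {k : ℕ} (β γ : Fin k → ℚ) : ℚ := 2 * dot β γ / dot γ γ

/-- The set `⟨Θ⟩⁺` of positive roots that are integral combinations of elements of `Θ`. -/
def spanPos {k : ℕ} (pos Θ : Finset (Fin k → ℚ)) : Finset (Fin k → ℚ) :=
  pos.filter fun γ => ∃ c : (Fin k → ℚ) → ℤ, γ = ∑ θ ∈ Θ, (c θ : ℚ) • θ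

/-- `δ_P`, the sum of the positive roots not lying in the integral span of `Θ`. -/
def deltaP {k : ℕ} (pos Θ : Finset (Fin k → ℚ)) : Fin k → ℚ :=
  ∑ γ ∈ pos \ spanPos pos Θ, γ

/-- Positive roots of type `D_ℓ`: `e_i ± e_j` (`i < j`). -/
def posD (ℓ : ℕ) : Finset (Fin ℓ → ℚ) :=
  (((univ : Finset (Fin ℓ × Fin ℓ)).filter fun p => p.1 < p.2).image
      fun p => E ℓ p.1 - E ℓ p.2) ∪
  (((univ : Finset (Fin ℓ × Fin ℓ)).filter fun p => p.1 < p.2).image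
      fun p => E ℓ p.1 + E ℓ p.2)

/-- Simple roots of type `D_ℓ`: `α_{i+1} = e_i - e_{i+1}` for `i + 1 < ℓ`, and the
fork root `α_ℓ = e_{ℓ-2} + e_{ℓ-1}`. -/
def simpleD (ℓ : ℕ) (i : Fin ℓ) : Fin ℓ → ℚ :=
  if h : i.val + 1 < ℓ then E ℓ i - E ℓ ⟨i.val + 1, h⟩
  else E ℓ ⟨ℓ - 2, by have := i.isLt; omega⟩ + E ℓ ⟨ℓ - 1, by have := i.isLt; omega⟩

/-!
The positive roots in the integral span of `Θ = {e_i - e_{i+1} : i + 3 ≤ ℓ}` are exactly the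
`e_i - e_j` with `j ≠ ℓ - 1`: every element of the span has vanishing last coordinate and
vanishing coordinate sum, and conversely such an `e_i - e_j` telescopes into simple roots of `Θ`.
Hence `δ_P = ∑_{i<j} (e_i + e_j) + ∑_{i<ℓ-1} (e_i - e_{ℓ-1}) = ℓ (e_0 + ⋯ + e_{ℓ-2})`, and the two
fork roots `e_{ℓ-2} ∓ e_{ℓ-1}` have squared length `2`, so both pairings equal `ℓ ∓ 0 = ℓ`.
-/

lemma dot_eq_dotProduct {k : ℕ} (v w : Fin k → ℚ) : dot v w = v ⬝ᵥ w := rfl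

lemma E_eq_single (k : ℕ) (i : Fin k) : E k i = Pi.single i 1 := by
  funext j
  simp [E, Pi.single_apply]

lemma pairing_E_sub_E {k : ℕ} (v : Fin k → ℚ) {a b : Fin k} (hab : a ≠ b) :
    pairing v (E k a - E k b) = v a - v b := by
  simp only [pairing, dot_eq_dotProduct, E_eq_single, dotProduct_sub, dotProduct_single,
    Pi.sub_apply, Pi.single_eq_same, Pi.single_eq_of_ne hab, Pi.single_eq_of_ne hab.symm]
  ring

lemma pairing_E_add_E {k : ℕ} (v : Fin k → ℚ) {a b : Fin k} (hab : a ≠ b) :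
    pairing v (E k a + E k b) = v a + v b := by
  simp only [pairing, dot_eq_dotProduct, E_eq_single, dotProduct_add, dotProduct_single,
    Pi.add_apply, Pi.single_eq_same, Pi.single_eq_of_ne hab, Pi.single_eq_of_ne hab.symm]
  ring

lemma E_sub_E_inj {k : ℕ} {i j i' j' : Fin k} (hij : i ≠ j)
    (h : E k i - E k j = E k i' - E k j') : i = i' ∧ j = j' := by
  have h1 := congrFun h i
  have h2 := congrFun h j
  simp only [E, Pi.sub_apply] at h1 h2
  grind

lemma E_add_E_inj {k : ℕ} {i j i' j' : Fin k} (hij : i < j) (hij' : i' < j')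
    (h : E k i + E k j = E k i' + E k j') : i = i' ∧ j = j' := by
  have h1 := congrFun h i
  have h2 := congrFun h j
  have h3 := congrFun h i'
  simp only [E, Pi.add_apply] at h1 h2 h3
  grind

lemma E_sub_E_ne_E_add_E {k : ℕ} (i j i' j' : Fin k) : E k i - E k j ≠ E k i' + E k j' := by
  intro h
  have := congrArg (fun v => ∑ t, v t) h
  norm_num [E, sum_add_distrib, sum_sub_distrib] at this

lemma sum_posD {M : Type*} [AddCommMonoid M] (ℓ : ℕ) (g : (Fin ℓ → ℚ) → M) :
    ∑ γ ∈ posD ℓ, g γ =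
      ∑ p : Fin ℓ × Fin ℓ with p.1 < p.2, (g (E ℓ p.1 - E ℓ p.2) + g (E ℓ p.1 + E ℓ p.2)) := by
  rw [posD, sum_union, sum_image, sum_image, sum_add_distrib]
  · exact fun p hp q hq h => Prod.ext_iff.2 (E_add_E_inj (mem_filter.1 hp).2 (mem_filter.1 hq).2 h)
  · exact fun p hp q hq h => Prod.ext_iff.2 (E_sub_E_inj (mem_filter.1 hp).2.ne h)
  · refine disjoint_left.2 fun γ h₁ h₂ => ?_
    obtain ⟨p, -, rfl⟩ := mem_image.1 h₁
    obtain ⟨q, -, h⟩ := mem_image.1 h₂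
    exact E_sub_E_ne_E_add_E _ _ _ _ h.symm

lemma sum_E_apply {ι : Type*} {k : ℕ} (s : Finset ι) (f : ι → Fin k) (c : Fin k) :
    (∑ x ∈ s, E k (f x)) c = #{x ∈ s | f x = c} := by
  simp [Finset.sum_apply, E, sum_boole, eq_comm]

lemma sum_filter_fst_eq {M : Type*} [AddCommMonoid M] (k : ℕ) (c : Fin k)
    (f : Fin k × Fin k → M) :
    ∑ p : Fin k × Fin k with p.1 < p.2 ∧ p.1 = c, f p = ∑ j ∈ Ioi c, f (c, j) := by
  refine sum_nbij' Prod.snd (Prod.mk c) ?_ ?_ ?_ ?_ ?_ <;>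
    simp +contextual [imp.swap (a := _ < _)]

lemma sum_filter_snd_eq {M : Type*} [AddCommMonoid M] (k : ℕ) (c : Fin k)
    (f : Fin k × Fin k → M) :
    ∑ p : Fin k × Fin k with p.1 < p.2 ∧ p.2 = c, f p = ∑ i ∈ Iio c, f (i, c) := by
  refine sum_nbij' Prod.fst (Prod.mk · c) ?_ ?_ ?_ ?_ ?_ <;>
    simp +contextual [imp.swap (a := _ < _)]

lemma sum_E_add_E_apply (k : ℕ) (c : Fin k) :
    (∑ p : Fin k × Fin k with p.1 < p.2, (E k p.1 + E k p.2)) c = (k : ℚ) - 1 := by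
  rw [sum_add_distrib, Pi.add_apply, sum_E_apply, sum_E_apply, filter_filter, filter_filter,
    card_eq_sum_ones, sum_filter_fst_eq, card_eq_sum_ones, sum_filter_snd_eq, ← card_eq_sum_ones,
    ← card_eq_sum_ones, Fin.card_Ioi, Fin.card_Iio, ← Nat.cast_add]
  have hc := c.is_lt
  rw [show k - 1 - c + c = k - 1 by omega, Nat.cast_sub (by omega), Nat.cast_one]

lemma mem_spanPos_iff {k : ℕ} {pos Θ : Finset (Fin k → ℚ)} {γ : Fin k → ℚ} :
    γ ∈ spanPos pos Θ ↔ γ ∈ pos ∧ γ ∈ Submodule.span ℤ (Θ : Set (Fin k → ℚ)) := by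
  refine mem_filter.trans (and_congr_right fun _ => ⟨?_, fun h => ?_⟩)
  · rintro ⟨c, rfl⟩
    refine Submodule.sum_mem _ fun θ hθ => ?_
    rw [Int.cast_smul_eq_zsmul]
    exact Submodule.smul_mem _ _ (Submodule.subset_span hθ)
  · obtain ⟨c, -, hc⟩ := Submodule.mem_span_finset.1 h
    exact ⟨c, by simp_rw [Int.cast_smul_eq_zsmul, hc]⟩

lemma deltaP_eq_sum_filter {k : ℕ} (pos Θ : Finset (Fin k → ℚ)) :
    deltaP pos Θ = ∑ γ ∈ pos with γ ∉ Submodule.span ℤ (Θ : Set (Fin k → ℚ)), γ := by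
  rw [deltaP]
  congr 1
  ext γ
  simp only [mem_sdiff, mem_filter, mem_spanPos_iff]
  tauto

def thetaD (ℓ : ℕ) : Finset (Fin ℓ → ℚ) :=
  ((univ : Finset (Fin ℓ)).filter fun i => i.val + 3 ≤ ℓ).image (simpleD ℓ)

lemma simpleD_of_lt {ℓ : ℕ} (i : Fin ℓ) (h : i.val + 1 < ℓ) :
    simpleD ℓ i = E ℓ i - E ℓ ⟨i.val + 1, h⟩ :=
  dif_pos h

lemma E_sub_E_mem_span_thetaD {n : ℕ} {i j : Fin (n + 1)} (hij : i ≤ j) (hj : j < Fin.last n) :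
    E (n + 1) i - E (n + 1) j ∈ Submodule.span ℤ (thetaD (n + 1) : Set (Fin (n + 1) → ℚ)) := by
  induction j using Fin.induction with
  | zero => simp [nonpos_iff_eq_zero.1 hij]
  | succ k ih =>
    rcases hij.eq_or_lt with rfl | hlt
    · simp
    have hk : k.castSucc < Fin.last n := Fin.castSucc_lt_succ.trans hj
    have hstep : E (n + 1) k.castSucc - E (n + 1) k.succ ∈
        Submodule.span ℤ (thetaD (n + 1) : Set (Fin (n + 1) → ℚ)) := by
      refine Submodule.subset_span (mem_image.2 ⟨k.castSucc, mem_filter.2 ⟨mem_univ _, ?_⟩,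
        simpleD_of_lt k.castSucc (by simp)⟩)
      simp [Fin.lt_def] at hj ⊢
      omega
    simpa using add_mem (ih (Fin.le_castSucc_iff.2 hlt) hk) hstep

lemma last_eq_zero_and_sum_eq_zero_of_mem_span_thetaD {n : ℕ} {v : Fin (n + 1) → ℚ}
    (hv : v ∈ Submodule.span ℤ (thetaD (n + 1) : Set (Fin (n + 1) → ℚ))) :
    v (Fin.last n) = 0 ∧ ∑ t, v t = 0 := by
  induction hv using Submodule.span_induction with
  | mem θ hθ =>
    obtain ⟨i, hi, rfl⟩ := mem_image.1 hθ
    have hi : i.val + 3 ≤ n + 1 := (mem_filter.1 hi).2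
    rw [simpleD_of_lt i (by omega)]
    refine ⟨?_, by simp [E, sum_sub_distrib]⟩
    simp only [Pi.sub_apply, E, Fin.ext_iff, Fin.val_last]
    rw [if_neg (by omega), if_neg (by omega), sub_zero]
  | zero => simp
  | add x y _ _ hx hy => simp [hx, hy, sum_add_distrib]
  | smul a x _ hx => simp [hx, ← mul_sum]

lemma E_sub_E_mem_span_thetaD_iff {n : ℕ} {i j : Fin (n + 1)} (hij : i < j) :
    E (n + 1) i - E (n + 1) j ∈ Submodule.span ℤ (thetaD (n + 1) : Set (Fin (n + 1) → ℚ)) ↔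
      j ≠ Fin.last n := by
  refine ⟨fun h hj => ?_, fun hj => E_sub_E_mem_span_thetaD hij.le (Fin.lt_last_iff_ne_last.2 hj)⟩
  subst hj
  have := (last_eq_zero_and_sum_eq_zero_of_mem_span_thetaD h).1
  simp [E, hij.ne'] at this

lemma E_add_E_notMem_span_thetaD {n : ℕ} (i j : Fin (n + 1)) :
    E (n + 1) i + E (n + 1) j ∉ Submodule.span ℤ (thetaD (n + 1) : Set (Fin (n + 1) → ℚ)) := by
  intro h
  have := (last_eq_zero_and_sum_eq_zero_of_mem_span_thetaD h).2
  simp [E, sum_add_distrib] at this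

lemma deltaP_posD_thetaD (n : ℕ) :
    deltaP (posD (n + 1)) (thetaD (n + 1)) =
      ∑ p : Fin (n + 1) × Fin (n + 1) with p.1 < p.2, (E (n + 1) p.1 + E (n + 1) p.2) +
      ∑ p : Fin (n + 1) × Fin (n + 1) with p.1 < p.2 ∧ p.2 = Fin.last n,
        (E (n + 1) p.1 - E (n + 1) p.2) := by
  rw [deltaP_eq_sum_filter, sum_filter, sum_posD, ← filter_filter, sum_filter (s := filter _ _),
    ← sum_add_distrib]
  refine sum_congr rfl fun p hp => ?_
  have hp : p.1 < p.2 := (mem_filter.1 hp).2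
  simp only [E_sub_E_mem_span_thetaD_iff hp, E_add_E_notMem_span_thetaD, not_false_eq_true,
    if_true, not_not]
  split_ifs <;> abel

lemma sum_E_sub_E_last_apply (n : ℕ) (c : Fin (n + 1)) :
    (∑ p : Fin (n + 1) × Fin (n + 1) with p.1 < p.2 ∧ p.2 = Fin.last n,
        (E (n + 1) p.1 - E (n + 1) p.2)) c = if c = Fin.last n then -(n : ℚ) else 1 := by
  rw [sum_filter_snd_eq, Finset.sum_apply]
  split_ifs with hc
  · subst hc
    simp [E]
  · simpa [E, hc] using Fin.exists_castSucc_eq.2 hc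

lemma deltaP_posD_thetaD_apply (n : ℕ) (c : Fin (n + 1)) :
    deltaP (posD (n + 1)) (thetaD (n + 1)) c = if c = Fin.last n then 0 else (n : ℚ) + 1 := by
  rw [deltaP_posD_thetaD, Pi.add_apply, sum_E_add_E_apply, sum_E_sub_E_last_apply]
  split_ifs <;> push_cast <;> ring

lemma simpleD_fork_left {n : ℕ} (hn : 1 ≤ n) (h : n + 1 - 2 < n + 1) :
    simpleD (n + 1) ⟨n + 1 - 2, h⟩ = E (n + 1) ⟨n - 1, by omega⟩ - E (n + 1) (Fin.last n) := by
  rw [simpleD_of_lt _ (by dsimp only; omega)]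
  congr 3
  dsimp only
  omega

lemma simpleD_fork_right {n : ℕ} (h : n + 1 - 1 < n + 1) :
    simpleD (n + 1) ⟨n + 1 - 1, h⟩ = E (n + 1) ⟨n - 1, by omega⟩ + E (n + 1) (Fin.last n) :=
  dif_neg (by dsimp only; omega)

/-- Koszul numbers for `SO(2ℓ)/U(1)×U(ℓ-1)` with the two fork roots removed: in type `D_ℓ`
(`ℓ ≥ 4`) with `Θ = Σ \ {α_{ℓ-1}, α_ℓ}`, one has
`⟨δ_P, h_{α_{ℓ-1}}^∨⟩ = ℓ` and `⟨δ_P, h_{α_ℓ}^∨⟩ = ℓ`. -/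
theorem stmt9 (ℓ : ℕ) (hl : 4 ≤ ℓ)
    (Θ : Finset (Fin ℓ → ℚ))
    (hΘ : Θ = ((univ : Finset (Fin ℓ)).filter fun i =>
        i.val + 3 ≤ ℓ).image (simpleD ℓ)) :
    pairing (deltaP (posD ℓ) Θ) (simpleD ℓ ⟨ℓ - 2, by omega⟩) = (ℓ : ℚ) ∧
    pairing (deltaP (posD ℓ) Θ) (simpleD ℓ ⟨ℓ - 1, by omega⟩) = (ℓ : ℚ) := by
  obtain ⟨n, rfl⟩ : ∃ n, ℓ = n + 1 := ⟨ℓ - 1, by omega⟩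
  have hne : (⟨n - 1, by omega⟩ : Fin (n + 1)) ≠ Fin.last n := by simp [Fin.ext_iff]; omega
  rw [hΘ, ← thetaD, simpleD_fork_left (by omega), simpleD_fork_right,
    pairing_E_sub_E _ hne, pairing_E_add_E _ hne, deltaP_posD_thetaD_apply,
    deltaP_posD_thetaD_apply, if_neg hne, if_pos rfl]
  push_cast
  constructor <;> ring
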